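/- Let ε > 0. If two RochetNet menus M1 and M2, both indexed by {0,1,...,K}, satisfy K+1 ≥ ⌈4/ε²⌉^{2n}, then they are ε-mode-connected; moreover, the continuous path connecting them can be taken piecewise linear with only five linear pieces. -/

import Mathlib

open MeasureTheory Finset

namespace RN

/-- A RochetNet menu: for each of the `K+1` option indices, an allocation in `[0,1]^n`
and a price. -/
abbrev Menu (n K : ℕ) := Fin (K + 1) → (Fin n → ℝ) × ℝ

/-- Inner product of a valuation and an allocation. -/
def dotp {n : ℕ} (v x : Fin n → ℝ) : ℝ := ∑ j, v j * x j

/-- A valid menu: allocations in `[0,1]^n`, nonnegative prices, default option `(0,0)`. -/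
def IsMenu {n K : ℕ} (M : Menu n K) : Prop :=
  (∀ k j, 0 ≤ (M k).1 j ∧ (M k).1 j ≤ 1) ∧ (∀ k, 0 ≤ (M k).2) ∧ M 0 = 0

/-- Utility of option `k` for valuation `v`. -/
def util {n K : ℕ} (M : Menu n K) (v : Fin n → ℝ) (k : Fin (K + 1)) : ℝ :=
  dotp v (M k).1 - (M k).2

/-- Price extracted at valuation `v`: the maximal price among utility-maximizing options. -/
noncomputable def price {n K : ℕ} (M : Menu n K) (v : Fin n → ℝ) : ℝ :=
  sSup {p : ℝ | ∃ k, (∀ k', util M v k' ≤ util M v k) ∧ p = (M k).2}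

/-- Option `k` is the buyer's selected option at `v`: it maximizes utility and, among
utility maximizers, has maximal price. -/
def Selected {n K : ℕ} (M : Menu n K) (v : Fin n → ℝ) (k : Fin (K + 1)) : Prop :=
  (∀ k', util M v k' ≤ util M v k) ∧ (M k).2 = price M v

/-- The set of valuations. -/
def V (n : ℕ) : Set (Fin n → ℝ) :=
  {v | (∀ j, 0 ≤ v j ∧ v j ≤ 1) ∧ ∑ j, v j ≤ 1}

/-- Expected revenue of menu `M` under valuation distribution `F`. -/
noncomputable def Rev {n K : ℕ} (F : Measure (Fin n → ℝ)) (M : Menu n K) : ℝ :=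
  ∫ v, price M v ∂F

/-- Option-wise convex combination `lam • M + (1 - lam) • M'` of two menus. -/
noncomputable def comb {n K : ℕ} (lam : ℝ) (M M' : Menu n K) : Menu n K :=
  fun k => (fun j => lam * (M k).1 j + (1 - lam) * (M' k).1 j,
            lam * (M k).2 + (1 - lam) * (M' k).2)

/-- `M` is `ε`-reducible: some subset `K'` of options containing the default option, of
cardinality at most `√(K+1)`, contains the buyer's selected option with probability
at least `1 - ε`. -/
def Reducible {n K : ℕ} (F : Measure (Fin n → ℝ)) (M : Menu n K) (ε : ℝ) : Prop :=
  ∃ K' : Finset (Fin (K + 1)), 0 ∈ K' ∧ (K'.card : ℝ) ≤ Real.sqrt (K + 1) ∧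
    (F {v | ∃ k ∈ K', Selected M v k}).toReal ≥ 1 - ε

/-- `M₁` and `M₂` are `ε`-mode-connected by a piecewise linear path with `pieces` linear
pieces, all whose menus are valid and have revenue at least `min (Rev M₁) (Rev M₂) - ε`. -/
def PLConnected {n K : ℕ} (F : Measure (Fin n → ℝ)) (M₁ M₂ : Menu n K) (ε : ℝ)
    (pieces : ℕ) : Prop :=
  ∃ P : Fin (pieces + 1) → Menu n K, P 0 = M₁ ∧ P (Fin.last pieces) = M₂ ∧
    (∀ i, IsMenu (P i)) ∧
    ∀ i : Fin pieces, ∀ lam ∈ Set.Icc (0 : ℝ) 1,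
      Rev F (comb lam (P i.castSucc) (P i.succ)) ≥ min (Rev F M₁) (Rev F M₂) - ε

/-!
Discounting every price by a factor `1 - δ` costs at most `δ` revenue. After the discount, each
option may be blended towards a cheaper option whose allocation is within `η` of its own: the
buyer's original choice `k` has such a copy that beats `k` by about `δ · price`, so whatever he
picks instead still pays at least `price - η / δ`. Rounding allocations to a grid of mesh
`1 / m` provides such copies from a net of at most `m ^ n` options. With `K + 1 ≥ m ^ (2n)`
options, the two reduced menus can be indexed so that every pair of their options sits at a
common index; on the segment between them the buyer can always take the blend of his two
choices, so revenue stays above the convex combination of the endpoint revenues.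
-/

section Price

variable {n K : ℕ}

lemma finite_optimal_prices (M : Menu n K) (v : Fin n → ℝ) :
    {p : ℝ | ∃ k, (∀ k', util M v k' ≤ util M v k) ∧ p = (M k).2}.Finite :=
  (Set.finite_range fun k => (M k).2).subset (by rintro _ ⟨k, -, rfl⟩; exact ⟨k, rfl⟩)

lemma exists_selected (M : Menu n K) (v : Fin n → ℝ) : ∃ k, Selected M v k := by
  obtain ⟨k, hk⟩ := Finite.exists_max (util M v)
  obtain ⟨k₀, hk₀, hp⟩ : price M v ∈ _ :=
    Set.Nonempty.csSup_mem ⟨(M k).2, k, hk, rfl⟩ (finite_optimal_prices M v)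
  exact ⟨k₀, hk₀, hp.symm⟩

lemma le_price {M : Menu n K} {v : Fin n → ℝ} {k : Fin (K + 1)}
    (hk : ∀ k', util M v k' ≤ util M v k) : (M k).2 ≤ price M v :=
  le_csSup (finite_optimal_prices M v).bddAbove ⟨k, hk, rfl⟩

lemma price_nonneg {M : Menu n K} (hM : ∀ k, 0 ≤ (M k).2) (v : Fin n → ℝ) :
    0 ≤ price M v := by
  obtain ⟨k, -, hk⟩ := exists_selected M v
  exact hk ▸ hM k

lemma dotp_le_one {v x : Fin n → ℝ} (hv : v ∈ V n) (hx : ∀ j, x j ≤ 1) : dotp v x ≤ 1 :=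
  calc dotp v x ≤ ∑ j, v j := sum_le_sum fun j _ => mul_le_of_le_one_right (hv.1 j).1 (hx j)
    _ ≤ 1 := hv.2

lemma dotp_sub_le {v x y : Fin n → ℝ} (hv : v ∈ V n) {c : ℝ} (hc : 0 ≤ c)
    (h : ∀ j, x j - y j ≤ c) : dotp v x - c ≤ dotp v y := by
  have : dotp v x - dotp v y ≤ c :=
    calc dotp v x - dotp v y = ∑ j, v j * (x j - y j) := by
          simp only [dotp, mul_sub, sum_sub_distrib]
      _ ≤ ∑ j, v j * c := sum_le_sum fun j _ => mul_le_mul_of_nonneg_left (h j) (hv.1 j).1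
      _ = (∑ j, v j) * c := by rw [sum_mul]
      _ ≤ c := mul_le_of_le_one_left hc hv.2
  linarith

lemma IsMenu.util_zero {M : Menu n K} (hM : IsMenu M) (v : Fin n → ℝ) : util M v 0 = 0 := by
  simp [util, dotp, hM.2.2]

lemma price_le_one {M : Menu n K} (hM : IsMenu M) {v : Fin n → ℝ} (hv : v ∈ V n) :
    price M v ≤ 1 := by
  obtain ⟨k, hk, hp⟩ := exists_selected M v
  have h0 : 0 ≤ util M v k := hM.util_zero v ▸ hk 0
  have h1 : dotp v (M k).1 ≤ 1 := dotp_le_one hv fun j => (hM.1 k j).2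
  rw [util] at h0
  linarith

end Price

section Measurability

variable {n K : ℕ}

lemma continuous_util (M : Menu n K) (k : Fin (K + 1)) : Continuous fun v => util M v k := by
  unfold util dotp
  fun_prop

/-- Options that are strictly suboptimal at `v` stay suboptimal nearby, so the set of
utility maximizers can only shrink near `v`. -/
lemma price_upperSemicontinuous (M : Menu n K) : UpperSemicontinuous (price M) := by
  intro v y hy
  have hmax : ∀ᶠ w in nhds v, ∀ k, (∀ k', util M w k' ≤ util M w k) →
      ∀ k', util M v k' ≤ util M v k := by
    refine Filter.eventually_all.2 fun k => ?_
    by_cases hk : ∀ k', util M v k' ≤ util M v k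
    · exact Filter.Eventually.of_forall fun _ _ => hk
    · obtain ⟨k', hk'⟩ := not_forall.1 hk
      filter_upwards [(continuous_util M k).continuousAt.eventually_lt
        (continuous_util M k').continuousAt (not_le.1 hk')] with w hw hkw
      exact absurd (hkw k') (not_le.2 hw)
  filter_upwards [hmax] with w hw
  obtain ⟨k, hk, hp⟩ := exists_selected M w
  exact hp ▸ (le_price (hw k hk)).trans_lt hy

lemma integrable_price (F : Measure (Fin n → ℝ)) [IsFiniteMeasure F] (M : Menu n K) :
    Integrable (price M) F := by
  refine .of_bound (price_upperSemicontinuous M).measurable.aestronglyMeasurable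
    (∑ k, |(M k).2|) (Filter.Eventually.of_forall fun v => ?_)
  obtain ⟨k, -, hp⟩ := exists_selected M v
  rw [Real.norm_eq_abs, ← hp]
  exact single_le_sum (fun k _ => abs_nonneg (M k).2) (mem_univ k)

lemma ae_mem_V (F : Measure (Fin n → ℝ)) [IsProbabilityMeasure F] (hFV : F (V n) = 1) :
    ∀ᵐ v ∂F, v ∈ V n := by
  have hV : MeasurableSet (V n) := by
    simp only [V, Set.ofPred_and, Set.ofPred_forall]
    refine .inter (.iInter fun j => .inter ?_ ?_) ?_ <;>
      exact measurableSet_le (by fun_prop) (by fun_prop)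
  exact mem_ae_iff.2 ((prob_compl_eq_zero_iff hV).2 hFV)

lemma rev_sub_le_rev {F : Measure (Fin n → ℝ)} [IsProbabilityMeasure F] (hFV : F (V n) = 1)
    {M M' : Menu n K} {c : ℝ} (h : ∀ v ∈ V n, price M v - c ≤ price M' v) :
    Rev F M - c ≤ Rev F M' := by
  have := integral_mono_ae (f := fun v => price M v - c)
    ((integrable_price F M).sub (integrable_const c))
    (integrable_price F M') (by filter_upwards [ae_mem_V F hFV] with v hv using h v hv)
  rwa [integral_sub (integrable_price F M) (integrable_const c), integral_const,
    probReal_univ, one_smul] at this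

end Measurability

section Operations

variable {n K : ℕ}

def discount (s : ℝ) (M : Menu n K) : Menu n K := fun k => ((M k).1, (1 - s) * (M k).2)

@[simp]
lemma discount_zero (M : Menu n K) : discount 0 M = M := by
  ext <;> simp [discount]

lemma comb_zero (M M' : Menu n K) : comb 0 M M' = M' := by
  ext <;> simp [comb]

lemma comb_comm (lam : ℝ) (M M' : Menu n K) : comb lam M M' = comb (1 - lam) M' M := by
  ext <;> simp only [comb] <;> ring

lemma comb_self_discount (lam s : ℝ) (M : Menu n K) :
    comb lam M (discount s M) = discount ((1 - lam) * s) M := by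
  ext <;> simp only [comb, discount] <;> ring

lemma comb_discount (lam s : ℝ) (M M' : Menu n K) :
    comb lam (discount s M) (discount s M') = discount s (comb lam M M') := by
  ext <;> simp only [comb, discount]
  ring

lemma util_discount (s : ℝ) (M : Menu n K) (v : Fin n → ℝ) (k : Fin (K + 1)) :
    util (discount s M) v k = util M v k + s * (M k).2 := by
  simp only [util, discount]
  ring

lemma util_comb (lam : ℝ) (M M' : Menu n K) (v : Fin n → ℝ) (k : Fin (K + 1)) :
    util (comb lam M M') v k = lam * util M v k + (1 - lam) * util M' v k := by
  simp only [util, comb, dotp, mul_add, sum_add_distrib, mul_left_comm _ lam,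
    mul_left_comm _ (1 - lam), ← mul_sum]
  ring

lemma IsMenu.discount {M : Menu n K} (hM : IsMenu M) {s : ℝ} (hs : s ≤ 1) :
    IsMenu (discount s M) :=
  ⟨hM.1, fun k => mul_nonneg (by linarith) (hM.2.1 k), by
    simp [RN.discount, hM.2.2]⟩

lemma IsMenu.comp {M : Menu n K} (hM : IsMenu M) {g : Fin (K + 1) → Fin (K + 1)}
    (hg : g 0 = 0) : IsMenu (M ∘ g) :=
  ⟨fun k => hM.1 (g k), fun k => hM.2.1 (g k), by simp [hg, hM.2.2]⟩

end Operations

section PointwisePrice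

variable {n K : ℕ}

lemma mul_price_le_price_discount (M : Menu n K) (v : Fin n → ℝ) {s : ℝ} (hs0 : 0 ≤ s)
    (hs1 : s ≤ 1) : (1 - s) * price M v ≤ price (discount s M) v := by
  rcases hs0.eq_or_lt with rfl | hs
  · simp
  obtain ⟨k₀, hk₀, hp₀⟩ := exists_selected M v
  obtain ⟨k₁, hk₁, hp₁⟩ := exists_selected (discount s M) v
  have h₁ := hk₁ k₀
  rw [util_discount, util_discount] at h₁
  have hle : (M k₀).2 ≤ (M k₁).2 := le_of_mul_le_mul_left (by linarith [hk₀ k₁]) hs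
  rw [← hp₀, ← hp₁]
  exact mul_le_mul_of_nonneg_left hle (by linarith)

/-- The buyer facing `comb lam X Y` can take an option carrying both of his choices in `X`
and `Y`. -/
lemma le_price_comb {X Y : Menu n K} (hcov : ∀ a b, ∃ w, X w = X a ∧ Y w = Y b)
    {lam : ℝ} (hl0 : 0 ≤ lam) (hl1 : lam ≤ 1) (v : Fin n → ℝ) :
    lam * price X v + (1 - lam) * price Y v ≤ price (comb lam X Y) v := by
  obtain ⟨a, ha, hpa⟩ := exists_selected X v
  obtain ⟨b, hb, hpb⟩ := exists_selected Y v
  obtain ⟨w, hwa, hwb⟩ := hcov a b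
  have hw : ∀ k, util (comb lam X Y) v k ≤ util (comb lam X Y) v w := by
    intro k
    have hXw : util X v w = util X v a := by rw [util, util, hwa]
    have hYw : util Y v w = util Y v b := by rw [util, util, hwb]
    rw [util_comb, util_comb, hXw, hYw]
    exact add_le_add (mul_le_mul_of_nonneg_left (ha k) hl0)
      (mul_le_mul_of_nonneg_left (hb k) (by linarith))
  calc lam * price X v + (1 - lam) * price Y v = (comb lam X Y w).2 := by
        simp [comb, hwa, hwb, hpa, hpb]
    _ ≤ price (comb lam X Y) v := le_price hw

def IsCheapRounding (M : Menu n K) (g : Fin (K + 1) → Fin (K + 1)) (η : ℝ) : Prop :=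
  ∀ k, ∃ r, g r = r ∧ (M r).2 ≤ (M k).2 ∧ ∀ j, (M k).1 j - (M r).1 j ≤ η

/-- The rounded copy `r` of the buyer's choice `k₀` has utility at least
`util k₀ + δ · price k₀ - η`, while any option has utility at most `util k₀ + δ · (its price)`. -/
lemma mul_sub_le_price_discount_comb {M : Menu n K} {g : Fin (K + 1) → Fin (K + 1)} {η : ℝ}
    (hg : IsCheapRounding M g η) (hη : 0 ≤ η) {δ t : ℝ} (hδ0 : 0 < δ) (hδ1 : δ ≤ 1)
    (ht0 : 0 ≤ t) (ht1 : t ≤ 1) {v : Fin n → ℝ} (hv : v ∈ V n) :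
    (1 - δ) * (price M v - η / δ) ≤ price (discount δ (comb t M (M ∘ g))) v := by
  set N := comb t M (M ∘ g)
  obtain ⟨k₀, hk₀, hp₀⟩ := exists_selected M v
  obtain ⟨r, hgr, hr_price, hr_alloc⟩ := hg k₀
  obtain ⟨k₁, hk₁, hp₁⟩ := exists_selected (discount δ N) v
  have hNr : N r = M r := by ext <;> simp only [N, comb, Function.comp_apply, hgr] <;> ring
  have h_r : util M v k₀ + δ * (M k₀).2 - η ≤ util (discount δ N) v r := by
    have := dotp_sub_le hv hη hr_alloc
    rw [util_discount, util, util, hNr]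
    nlinarith
  have h_k₁ : util (discount δ N) v k₁ ≤ util M v k₀ + δ * (N k₁).2 := by
    rw [util_discount, util_comb]
    have := hk₀ k₁
    have := hk₀ (g k₁)
    change _ + (1 - t) * util M v (g k₁) + _ ≤ _
    nlinarith
  have hb : price M v - η / δ ≤ (N k₁).2 := by
    rw [← hp₀, sub_le_comm, le_div_iff₀ hδ0]
    linarith [hk₁ r]
  rw [← hp₁]
  exact mul_le_mul_of_nonneg_left hb (by linarith)

end PointwisePrice

section Revenue

variable {n K : ℕ} {F : Measure (Fin n → ℝ)} [IsProbabilityMeasure F]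

lemma le_rev_comb {X Y : Menu n K} (hcov : ∀ a b, ∃ w, X w = X a ∧ Y w = Y b)
    {lam : ℝ} (hl0 : 0 ≤ lam) (hl1 : lam ≤ 1) :
    lam * Rev F X + (1 - lam) * Rev F Y ≤ Rev F (comb lam X Y) := by
  have hX := (integrable_price F X).const_mul lam
  have hY := (integrable_price F Y).const_mul (1 - lam)
  have := integral_mono (f := fun v => lam * price X v + (1 - lam) * price Y v) (hX.add hY)
    (integrable_price F _) (le_price_comb hcov hl0 hl1)
  rwa [integral_add hX hY, integral_const_mul, integral_const_mul] at this

lemma rev_sub_le_rev_comb_discount (hFV : F (V n) = 1) {M : Menu n K} (hM : IsMenu M)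
    {δ ε s : ℝ} (hδ0 : 0 ≤ δ) (hδε : δ ≤ ε) (hδ1 : δ ≤ 1) (hs0 : 0 ≤ s) (hs1 : s ≤ 1) :
    Rev F M - ε ≤ Rev F (comb s M (discount δ M)) := by
  rw [comb_self_discount]
  refine rev_sub_le_rev hFV fun v hv => ?_
  have hsδ : (1 - s) * δ ≤ δ := mul_le_of_le_one_left hδ0 (by linarith)
  have := mul_price_le_price_discount M v (mul_nonneg (by linarith) hδ0) (hsδ.trans hδ1)
  nlinarith [price_nonneg hM.2.1 v, price_le_one hM hv]

lemma rev_sub_le_rev_comb_rounding (hFV : F (V n) = 1) {M : Menu n K} (hM : IsMenu M)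
    {g : Fin (K + 1) → Fin (K + 1)} {η δ ε s : ℝ} (hg : IsCheapRounding M g η) (hη : 0 ≤ η)
    (hδ0 : 0 < δ) (hδ1 : δ ≤ 1) (hε : δ + η / δ ≤ ε) (hs0 : 0 ≤ s) (hs1 : s ≤ 1) :
    Rev F M - ε ≤ Rev F (comb s (discount δ M) (discount δ (M ∘ g))) := by
  rw [comb_discount]
  refine rev_sub_le_rev hFV fun v hv => ?_
  have := mul_sub_le_price_discount_comb hg hη hδ0 hδ1 hs0 hs1 hv
  have : 0 ≤ η / δ := div_nonneg hη hδ0.le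
  nlinarith [price_le_one hM hv]

end Revenue

theorem plConnected_of_isCheapRounding {n K : ℕ} {F : Measure (Fin n → ℝ)}
    [IsProbabilityMeasure F] (hFV : F (V n) = 1) {M₁ M₂ : Menu n K} (hM₁ : IsMenu M₁)
    (hM₂ : IsMenu M₂) {g₁ g₂ : Fin (K + 1) → Fin (K + 1)} {η δ ε : ℝ}
    (hg₁ : IsCheapRounding M₁ g₁ η) (hg₂ : IsCheapRounding M₂ g₂ η) (h0₁ : g₁ 0 = 0)
    (h0₂ : g₂ 0 = 0) (hcov : ∀ a b, ∃ w, g₁ w = g₁ a ∧ g₂ w = g₂ b) (hη : 0 ≤ η)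
    (hδ0 : 0 < δ) (hδ1 : δ ≤ 1) (hε : δ + η / δ ≤ ε) :
    PLConnected F M₁ M₂ ε 5 := by
  have hδε : δ ≤ ε := le_trans (le_add_of_nonneg_right (div_nonneg hη hδ0.le)) hε
  set X₁ := discount δ (M₁ ∘ g₁)
  set X₂ := discount δ (M₂ ∘ g₂)
  have hX₁ : Rev F M₁ - ε ≤ Rev F X₁ := by
    simpa only [comb_zero] using
      rev_sub_le_rev_comb_rounding hFV hM₁ hg₁ hη hδ0 hδ1 hε le_rfl zero_le_one
  have hX₂ : Rev F M₂ - ε ≤ Rev F X₂ := by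
    simpa only [comb_zero] using
      rev_sub_le_rev_comb_rounding hFV hM₂ hg₂ hη hδ0 hδ1 hε le_rfl zero_le_one
  have hcovX : ∀ a b, ∃ w, X₁ w = X₁ a ∧ X₂ w = X₂ b := fun a b => by
    obtain ⟨w, hw₁, hw₂⟩ := hcov a b
    exact ⟨w, by simp [X₁, discount, hw₁], by simp [X₂, discount, hw₂]⟩
  have h₁ := min_le_left (Rev F M₁) (Rev F M₂)
  have h₂ := min_le_right (Rev F M₁) (Rev F M₂)
  refine ⟨![M₁, discount δ M₁, X₁, X₂, discount δ M₂, M₂], rfl, rfl, fun i => ?_,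
    fun i lam ⟨hl0, hl1⟩ => ?_⟩
  · fin_cases i
    exacts [hM₁, hM₁.discount hδ1, (hM₁.comp h0₁).discount hδ1,
      (hM₂.comp h0₂).discount hδ1, hM₂.discount hδ1, hM₂]
  fin_cases i <;> dsimp only [Matrix.cons_val, Fin.reduceCastSucc, Fin.reduceSucc, Fin.reduceFinMk]
  · linarith [rev_sub_le_rev_comb_discount hFV hM₁ hδ0.le hδε hδ1 hl0 hl1]
  · linarith [rev_sub_le_rev_comb_rounding hFV hM₁ hg₁ hη hδ0 hδ1 hε hl0 hl1]
  · nlinarith [le_rev_comb (F := F) hcovX hl0 hl1]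
  · rw [comb_comm]
    linarith [rev_sub_le_rev_comb_rounding hFV hM₂ hg₂ hη hδ0 hδ1 hε (s := 1 - lam)
      (by linarith) (by linarith)]
  · rw [comb_comm]
    linarith [rev_sub_le_rev_comb_discount hFV hM₂ hδ0.le hδε hδ1 (s := 1 - lam)
      (by linarith) (by linarith)]

/-- The cheapest element of each fiber of `c`, ties broken by the order of `ι`. -/
lemma exists_cheapest_in_fibers {ι γ : Type*} [Fintype ι] [LinearOrder ι] (c : ι → γ)
    (p : ι → ℝ) {i₀ : ι} (hi₀ : ∀ k, p i₀ ≤ p k ∧ i₀ ≤ k) :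
    ∃ S : Finset ι, i₀ ∈ S ∧ Set.InjOn c S ∧ ∀ k, ∃ r ∈ S, c r = c k ∧ p r ≤ p k := by
  classical
  let key : ι → ℝ ×ₗ ι := fun r => toLex (p r, r)
  refine ⟨univ.filter fun r => ∀ k, c k = c r → key r ≤ key k, ?_, ?_, fun k => ?_⟩
  · simpa using fun k _ => Prod.Lex.toLex_mono (hi₀ k)
  · intro r hr r' hr' hc
    simp only [coe_filter, mem_univ, true_and, Set.mem_ofPred_eq] at hr hr'
    exact congrArg (fun x => (ofLex x).2) (le_antisymm (hr r' hc.symm) (hr' r hc))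
  obtain ⟨r, hr, hmin⟩ := (univ.filter fun r => c r = c k).exists_min_image key ⟨k, by simp⟩
  rw [mem_filter] at hr
  refine ⟨r, mem_filter.2 ⟨mem_univ r, fun k' hk' => hmin k' ?_⟩, hr.2,
    Prod.Lex.monotone_fst _ _ (hmin k (by simp))⟩
  simp [hk', hr.2]

lemma exists_surjOn_extend {α β : Type*} [Fintype α] [DecidableEq α] [DecidableEq β]
    {s : Finset α} {T : Finset β} {f : α → β} (hf : Set.InjOn f s) (hfT : ∀ a, f a ∈ T)
    (hT : #T ≤ Fintype.card α) :
    ∃ G : α → β, (∀ a, G a ∈ T) ∧ (∀ a ∈ s, G a = f a) ∧ ∀ b ∈ T, ∃ a, G a = b := by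
  have hcard : #(T \ s.image f) ≤ #sᶜ := by
    rw [card_sdiff_of_subset (image_subset_iff.2 fun a _ => hfT a), card_image_of_injOn hf,
      card_compl]
    omega
  obtain ⟨e⟩ := Function.Embedding.nonempty_of_card_le (α := ↥(T \ s.image f)) (β := ↥sᶜ)
    (by rwa [Fintype.card_coe, Fintype.card_coe])
  let e' : ↥(T \ s.image f) → α := fun b => e b
  have he' : Function.Injective e' := fun b b' h => e.injective (Subtype.val_injective h)
  have hs : ∀ a ∈ s, ¬∃ b, e' b = a := by
    rintro a ha ⟨b, rfl⟩
    exact mem_compl.1 (e b).2 ha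
  refine ⟨Function.extend e' Subtype.val f, fun a => ?_,
    fun a ha => Function.extend_apply' _ _ _ (hs a ha), fun b hb => ?_⟩
  · by_cases h : ∃ b, e' b = a
    · obtain ⟨b, rfl⟩ := h
      rw [he'.extend_apply]
      exact (mem_sdiff.1 b.2).1
    · rw [Function.extend_apply' _ _ _ h]
      exact hfT a
  · by_cases hbs : b ∈ s.image f
    · obtain ⟨a, ha, rfl⟩ := mem_image.1 hbs
      exact ⟨a, Function.extend_apply' _ _ _ (hs a ha)⟩
    · exact ⟨e' ⟨b, mem_sdiff.2 ⟨hb, hbs⟩⟩, he'.extend_apply _ _ _⟩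

/-- Options of `S₁ ∪ S₂` keep their own coordinates (padded with `i₀`); the remaining
options, of which there are enough, realize the missing pairs of `S₁ ×ˢ S₂`. -/
lemma exists_pairing_of_card_mul_le {ι : Type*} [Fintype ι] [DecidableEq ι] {i₀ : ι}
    {S₁ S₂ : Finset ι} (h₁ : i₀ ∈ S₁) (h₂ : i₀ ∈ S₂) (hcard : #S₁ * #S₂ ≤ Fintype.card ι) :
    ∃ g₁ g₂ : ι → ι, (∀ k ∈ S₁, g₁ k = k) ∧ (∀ k ∈ S₂, g₂ k = k) ∧
      ∀ a b, ∃ w, g₁ w = g₁ a ∧ g₂ w = g₂ b := by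
  let π : ι → ι × ι := fun k => (if k ∈ S₁ then k else i₀, if k ∈ S₂ then k else i₀)
  have hπ : ∀ k, π k ∈ S₁ ×ˢ S₂ := fun k => by
    simp only [π, mem_product]
    constructor <;> split_ifs <;> assumption
  have hinj : Set.InjOn π ↑(S₁ ∪ S₂) := by
    intro k hk k' hk' h
    simp only [π, Prod.mk.injEq, coe_union, Set.mem_union, mem_coe] at h hk hk'
    grind
  obtain ⟨G, hGT, hGπ, hGsurj⟩ := exists_surjOn_extend hinj hπ (by rwa [card_product])
  refine ⟨fun k => (G k).1, fun k => (G k).2, fun k hk => ?_, fun k hk => ?_, fun a b => ?_⟩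
  · simp [hGπ k (mem_union_left _ hk), π, hk]
  · simp [hGπ k (mem_union_right _ hk), π, hk]
  obtain ⟨w, hw⟩ := hGsurj ((G a).1, (G b).2)
    (mem_product.2 ⟨(mem_product.1 (hGT a)).1, (mem_product.1 (hGT b)).2⟩)
  exact ⟨w, by simp [hw], by simp [hw]⟩

lemma exists_grid {m : ℕ} (hm : 0 < m) :
    ∃ c : ℝ → Fin m, ∀ a b, a ≤ 1 → 0 ≤ b → c a = c b → a - b ≤ 1 / m := by
  refine ⟨fun a => ⟨min ⌊a * m⌋₊ (m - 1), by omega⟩, fun a b ha hb hab => ?_⟩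
  have hab' : min ⌊a * m⌋₊ (m - 1) = min ⌊b * m⌋₊ (m - 1) := Fin.mk.inj_iff.1 hab
  have hmR : (0 : ℝ) < m := by exact_mod_cast hm
  have hb' : ((min ⌊b * m⌋₊ (m - 1) : ℕ) : ℝ) ≤ b * m :=
    (Nat.cast_le.2 (min_le_left _ _)).trans (Nat.floor_le (by positivity))
  have ha' : a * m ≤ ((min ⌊a * m⌋₊ (m - 1) : ℕ) : ℝ) + 1 := by
    rcases le_total ⌊a * m⌋₊ (m - 1) with h | h
    · rw [min_eq_left h]
      exact (Nat.lt_floor_add_one _).le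
    · rw [min_eq_right h, Nat.cast_pred hm]
      nlinarith
  rw [hab'] at ha'
  rw [le_div_iff₀ hmR, sub_mul]
  linarith

/-- Round allocations to a grid of mesh `1 / m` and keep the cheapest option in each cell. -/
lemma exists_cheap_net {n K : ℕ} {M : Menu n K} (hM : IsMenu M) {m : ℕ} (hm : 0 < m) :
    ∃ S : Finset (Fin (K + 1)), 0 ∈ S ∧ #S ≤ m ^ n ∧
      ∀ k, ∃ r ∈ S, (M r).2 ≤ (M k).2 ∧ ∀ j, (M k).1 j - (M r).1 j ≤ 1 / m := by
  obtain ⟨c, hc⟩ := exists_grid hm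
  have h0 : ∀ k, (M 0).2 ≤ (M k).2 ∧ 0 ≤ k :=
    fun k => ⟨by simpa [hM.2.2] using hM.2.1 k, Fin.zero_le k⟩
  obtain ⟨S, hS0, hinj, hrep⟩ :=
    exists_cheapest_in_fibers (fun k j => c ((M k).1 j)) (fun k => (M k).2) h0
  refine ⟨S, hS0, ?_, fun k => ?_⟩
  · simpa using card_le_card_of_injOn _ (fun _ _ => mem_coe.2 (mem_univ _)) hinj
  obtain ⟨r, hrS, hcr, hpr⟩ := hrep k
  exact ⟨r, hrS, hpr, fun j =>
    hc _ _ (hM.1 k j).2 (hM.1 r j).1 (congrFun hcr j).symm⟩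

lemma IsCheapRounding.of_exists_mem {n K : ℕ} {M : Menu n K} {S : Finset (Fin (K + 1))}
    {g : Fin (K + 1) → Fin (K + 1)} {η : ℝ}
    (hS : ∀ k, ∃ r ∈ S, (M r).2 ≤ (M k).2 ∧ ∀ j, (M k).1 j - (M r).1 j ≤ η)
    (hg : ∀ k ∈ S, g k = k) : IsCheapRounding M g η := fun k => by
  obtain ⟨r, hr, hp, hx⟩ := hS k
  exact ⟨r, hg r hr, hp, hx⟩

lemma min_add_div_min_le {ε : ℝ} (hε : 0 < ε) {m : ℕ} (hm : 4 / ε ^ 2 ≤ m) (hm0 : 0 < m) :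
    min (ε / 2) 1 + 1 / m / min (ε / 2) 1 ≤ ε := by
  have hmR : (1 : ℝ) ≤ m := by exact_mod_cast hm0
  rcases le_total (ε / 2) 1 with h | h
  · rw [div_le_iff₀ (by positivity)] at hm
    have : 1 / m / (ε / 2) ≤ ε / 2 := by
      rw [div_le_iff₀ (by positivity), div_le_iff₀ (by positivity)]
      nlinarith
    rw [min_eq_left h]
    linarith
  · rw [min_eq_right h, div_one]
    have : 1 / (m : ℝ) ≤ 1 := by rw [div_le_one (by positivity)]; exact hmR
    linarith

/-- For `ε > 0`, any two RochetNet menus `M₁`, `M₂` with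
`K + 1 ≥ ⌈4/ε²⌉^(2n)` options are `ε`-mode-connected via a piecewise linear path
with five linear pieces. -/
theorem statement5 {n K : ℕ} (F : Measure (Fin n → ℝ)) [IsProbabilityMeasure F]
    (hFV : F (V n) = 1) (ε : ℝ) (hε : 0 < ε)
    (hK : ⌈4 / ε ^ 2⌉₊ ^ (2 * n) ≤ K + 1)
    (M₁ M₂ : Menu n K) (hM₁ : IsMenu M₁) (hM₂ : IsMenu M₂) :
    PLConnected F M₁ M₂ ε 5 := by
  set m := ⌈4 / ε ^ 2⌉₊
  have hm : 0 < m := Nat.ceil_pos.2 (by positivity)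
  obtain ⟨S₁, h0₁, hS₁, hnet₁⟩ := exists_cheap_net hM₁ hm
  obtain ⟨S₂, h0₂, hS₂, hnet₂⟩ := exists_cheap_net hM₂ hm
  have hcard : #S₁ * #S₂ ≤ Fintype.card (Fin (K + 1)) :=
    calc #S₁ * #S₂ ≤ m ^ n * m ^ n := Nat.mul_le_mul hS₁ hS₂
      _ = m ^ (2 * n) := by ring
      _ ≤ Fintype.card (Fin (K + 1)) := by simpa using hK
  obtain ⟨g₁, g₂, hfix₁, hfix₂, hcov⟩ := exists_pairing_of_card_mul_le h0₁ h0₂ hcard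
  exact plConnected_of_isCheapRounding hFV hM₁ hM₂ (.of_exists_mem hnet₁ hfix₁)
    (.of_exists_mem hnet₂ hfix₂) (hfix₁ 0 h0₁) (hfix₂ 0 h0₂) hcov (by positivity) (lt_min (by positivity) one_pos)
    (min_le_right _ _) (min_add_div_min_le hε (Nat.le_ceil _) hm)

end RN
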